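/- Let (E,T,S,e) be a conditional expectation preserving system with T strictly positive. Then Sg = g for every g in the range R(T) of T. -/

import Mathlib

noncomputable section

open Function Set

variable {E : Type*}

/-- `e` is a weak order unit: `e > 0` and `e ⊓ |x| = 0` implies `x = 0`. -/
def WeakOrderUnit [Lattice E] [AddCommGroup E] (e : E) : Prop :=
  0 < e ∧ ∀ x : E, e ⊓ (x ⊔ -x) = 0 → x = 0

/-- `p` is a component of `q ∈ E₊`: `0 ≤ p ≤ q` and `(q - p) ⊓ p = 0`. -/
def IsComponent [Lattice E] [AddCommGroup E] (q p : E) : Prop :=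
  0 ≤ p ∧ p ≤ q ∧ (q - p) ⊓ p = 0

/-- `partialSup f n = ⋁_{j < n} f j`, with the empty supremum equal to `0`. -/
def partialSup [Lattice E] [Zero E] (f : ℕ → E) : ℕ → E
  | 0 => 0
  | n + 1 => partialSup f n ⊔ f n

/-- The band projection of `e` onto the band generated by `g`: `P_g e = ⨆_{m ∈ ℕ} (e ⊓ m•g)`. -/
def bandProjApp [ConditionallyCompleteLattice E] [AddCommGroup E] (g e : E) : E :=
  ⨆ m : ℕ, e ⊓ m • g

/-- `qComp Sinv e p k = p ⊓ S⁻ᵏp ⊓ (e - ⋁_{j=1}^{k-1} S⁻ʲp)` (empty supremum is `0`). -/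
def qComp [Lattice E] [AddCommGroup E] (Sinv : E → E) (e p : E) (k : ℕ) : E :=
  p ⊓ Sinv^[k] p ⊓ (e - partialSup (fun j => Sinv^[j + 1] p) (k - 1))

/-- `(E,T,S,e)` is a conditional expectation preserving system: `E` is a Dedekind complete
Riesz space (typeclass assumptions), `e` is a weak order unit, `T` is a strictly positive
conditional expectation operator with `Te = e`, and `S` is an order-continuous Riesz
homomorphism with `Se = e` and `TS = T`. -/
structure IsCEPS [ConditionallyCompleteLattice E] [AddCommGroup E] [Module ℝ E]
    (T S : E →ₗ[ℝ] E) (e : E) : Prop where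
  unit : WeakOrderUnit e
  T_pos : ∀ f : E, 0 ≤ f → 0 ≤ T f
  T_strictPos : ∀ f : E, 0 ≤ f → T f = 0 → f = 0
  T_proj : ∀ f : E, T (T f) = T f
  T_ordCont : ∀ D : Set E, D.Nonempty → DirectedOn (· ≥ ·) D → IsGLB D 0 →
    IsGLB ((⇑T) '' D) 0
  T_range_sublattice : ∀ x ∈ Set.range T, ∀ y ∈ Set.range T, x ⊔ y ∈ Set.range T
  T_range_dedekind : ∀ D : Set E, D ⊆ Set.range T → D.Nonempty →
    (∃ b ∈ Set.range T, ∀ x ∈ D, x ≤ b) →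
    ∃ s ∈ Set.range T, (∀ x ∈ D, x ≤ s) ∧ ∀ b ∈ Set.range T, (∀ x ∈ D, x ≤ b) → s ≤ b
  T_weakUnit : ∀ u : E, WeakOrderUnit u → WeakOrderUnit (T u)
  Te : T e = e
  S_hom : ∀ x y : E, S (x ⊔ y) = S x ⊔ S y
  S_ordCont : ∀ D : Set E, D.Nonempty → DirectedOn (· ≥ ·) D → IsGLB D 0 →
    IsGLB ((⇑S) '' D) 0
  Se : S e = e
  TS : ∀ f : E, T (S f) = T f

/-- `E` is `T`-universally complete: every upward directed subset `D` of `E₊` for which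
`T '' D` is order bounded in `E` has a supremum in `E`. -/
def TUnivComplete [ConditionallyCompleteLattice E] [AddCommGroup E] [Module ℝ E]
    (T : E →ₗ[ℝ] E) : Prop :=
  ∀ D : Set E, D.Nonempty → D ⊆ {x : E | 0 ≤ x} → DirectedOn (· ≤ ·) D →
    BddAbove ((⇑T) '' D) → BddBelow ((⇑T) '' D) → ∃ s : E, IsLUB D s

/-- `(S, v)` is aperiodic (with `Sinv` the inverse of `S`): for every `N ∈ ℕ` and every
nonzero component `c` of `v` there exist `k ≥ N` and a component `u` of `c` with
`q(u,k) ≠ 0`. -/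
def IsAperiodic [Lattice E] [AddCommGroup E] (Sinv : E → E) (e v : E) : Prop :=
  ∀ N : ℕ, ∀ c : E, IsComponent v c → c ≠ 0 →
    ∃ k : ℕ, N ≤ k ∧ ∃ u : E, IsComponent c u ∧ qComp Sinv e u k ≠ 0

/-- `(S, e)` is periodic (with `Sinv` the inverse of `S`): there is `N ∈ ℕ` such that
`q(c,k) = 0` for all `k ≥ N` and all components `c` of `e` with `0 ≠ c ≠ e`. -/
def IsPeriodic [Lattice E] [AddCommGroup E] (Sinv : E → E) (e : E) : Prop :=
  ∃ N : ℕ, ∀ c : E, IsComponent e c → c ≠ 0 → c ≠ e → ∀ k : ℕ, N ≤ k → qComp Sinv e c k = 0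

/-!
Strict positivity of `T` and `TS = T` force `S` to fix every component `c` of `e` with
`Tc = c`: the positive element `c ⊓ (e - Sc)` has `T`-image below `c ⊓ (e - c) = 0`.
For `0 ≤ x ∈ R(T)` the band projections of `e` onto `(x - (k+1)e)⁺` are such components, and
they interlace the layers `(x - ke)⁺ ⊓ e`, which sum to `x ⊓ ne`. Summing the staircase gives
`x ⊓ (n+1)e ≤ Sx + e`, hence `x ≤ Sx + e` as `e` is a weak unit. With `x = ng` this reads
`n(g - Sg) ≤ e` for all `n`, so `g ≤ Sg` by the Archimedean property, and `T(Sg - g) = 0`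
turns this into equality. A general `g ∈ R(T)` is `g⁺ - g⁻`.
-/

section LatticeOrderedGroup

variable [Lattice E] [AddCommGroup E] [AddLeftMono E]

theorem inf_add_le_add_inf {u v w : E} (hu : 0 ≤ u) (hv : 0 ≤ v) (hw : 0 ≤ w) :
    u ⊓ (v + w) ≤ u ⊓ v + u ⊓ w := by
  have hleft : u ⊓ (v + w) ≤ u ⊓ v + w :=
    calc u ⊓ (v + w) ≤ (u + w) ⊓ (v + w) := inf_le_inf_right _ (le_add_of_nonneg_right hw)
      _ = u ⊓ v + w := (inf_add u v w).symm
  have hright : u ⊓ (v + w) ≤ u ⊓ v + u :=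
    inf_le_left.trans (le_add_of_nonneg_left (le_inf hu hv))
  calc u ⊓ (v + w) ≤ (u ⊓ v + w) ⊓ (u ⊓ v + u) := le_inf hleft hright
    _ = u ⊓ v + u ⊓ w := by rw [← add_inf, inf_comm w]

theorem le_of_le_add_of_inf_eq_zero {x y b : E} (hx : 0 ≤ x) (hy : 0 ≤ y) (hb : 0 ≤ b)
    (hxb : x ⊓ b = 0) (h : x ≤ y + b) : x ≤ y :=
  calc x = x ⊓ (y + b) := (inf_eq_left.2 h).symm
    _ ≤ x ⊓ y + x ⊓ b := inf_add_le_add_inf hx hy hb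
    _ = x ⊓ y := by rw [hxb, add_zero]
    _ ≤ y := inf_le_right

theorem nsmul_inf_eq_zero {p b : E} (hp : 0 ≤ p) (hb : 0 ≤ b) (h : p ⊓ b = 0) (m : ℕ) :
    m • p ⊓ b = 0 := by
  induction m with
  | zero => rw [zero_nsmul, inf_eq_left.2 hb]
  | succ m ih =>
    refine le_antisymm ?_ (le_inf (nsmul_nonneg hp _) hb)
    calc (m + 1) • p ⊓ b = b ⊓ (m • p + p) := by rw [succ_nsmul, inf_comm]
      _ ≤ b ⊓ m • p + b ⊓ p := inf_add_le_add_inf hb (nsmul_nonneg hp m) hp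
      _ = 0 := by rw [inf_comm, ih, inf_comm, h, add_zero]

theorem posPart_inf_eq_sub_posPart_sub {e : E} (he : 0 ≤ e) (a : E) :
    a⁺ ⊓ e = a⁺ - (a - e)⁺ := by
  rw [inf_eq_sub_posPart_sub]
  congr 1
  rw [posPart_def a, sup_sub, zero_sub, posPart_def, posPart_def, sup_assoc,
    sup_eq_right.2 (neg_nonpos.2 he)]

theorem sub_posPart_add_inf_le_negPart {e : E} (a : E) : e - (a + e)⁺ ⊓ e ≤ a⁻ := by
  rw [sub_inf, sub_self, negPart_def]
  exact sup_le_sup_right ((sub_le_sub_left (le_posPart _) e).trans_eq (by abel)) 0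

theorem sum_posPart_sub_nsmul_inf {x e : E} (hx : 0 ≤ x) (he : 0 ≤ e) (n : ℕ) :
    ∑ k ∈ Finset.range n, (x - k • e)⁺ ⊓ e = x ⊓ n • e := by
  simp_rw [posPart_inf_eq_sub_posPart_sub he, sub_sub, ← succ_nsmul]
  rw [Finset.sum_range_sub' (fun k => (x - k • e)⁺), zero_nsmul, sub_zero,
    posPart_of_nonneg hx, inf_eq_sub_posPart_sub]

end LatticeOrderedGroup

section DedekindComplete

variable [ConditionallyCompleteLattice E] [AddCommGroup E] [AddLeftMono E]

theorem nonpos_of_forall_nsmul_le {x y : E} (h : ∀ n : ℕ, n • x ≤ y) : x ≤ 0 := by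
  have hbdd : BddAbove (range fun n : ℕ => n • x) := ⟨y, forall_mem_range.2 h⟩
  have hsup : ⨆ n : ℕ, n • x ≤ (⨆ n : ℕ, n • x) - x := ciSup_le fun n =>
    le_sub_iff_add_le.2 ((succ_nsmul x n).symm.trans_le (le_ciSup hbdd (n + 1)))
  exact (le_sub_self_iff _).1 hsup

theorem WeakOrderUnit.le_of_forall_inf_nsmul_le {e x y : E} (he : WeakOrderUnit e)
    (hx : 0 ≤ x) (h : ∀ n : ℕ, x ⊓ n • e ≤ y) : x ≤ y := by
  set d := (x - y)⁺ ⊓ e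
  have hd_le : ∀ n : ℕ, d ≤ x - x ⊓ n • e := fun n =>
    calc d ≤ (x - y)⁺ := inf_le_left
      _ ≤ (x - x ⊓ n • e)⁺ := posPart_mono (sub_le_sub_left (h n) x)
      _ = x - x ⊓ n • e := posPart_of_nonneg (sub_nonneg.2 inf_le_left)
  have hnd : ∀ n : ℕ, n • d ≤ x ⊓ n • e := by
    intro n
    induction n with
    | zero => simp only [zero_nsmul, inf_eq_right.2 hx, le_refl]
    | succ n ih =>
      rw [succ_nsmul, succ_nsmul]
      refine le_inf ?_ (add_le_add (ih.trans inf_le_right) inf_le_right)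
      calc n • d + d ≤ x ⊓ n • e + (x - x ⊓ n • e) := add_le_add ih (hd_le n)
        _ = x := add_sub_cancel _ _
  have hd : d = 0 := le_antisymm (nonpos_of_forall_nsmul_le fun n => (hnd n).trans inf_le_left)
    (le_inf (posPart_nonneg _) he.1.le)
  have habs : (x - y)⁺ ⊔ -(x - y)⁺ = (x - y)⁺ :=
    sup_eq_left.2 ((neg_nonpos.2 (posPart_nonneg _)).trans (posPart_nonneg _))
  have hpos : (x - y)⁺ = 0 := he.2 _ (by rw [habs, inf_comm]; exact hd)
  exact sub_nonpos.1 (posPart_eq_zero.1 hpos)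

end DedekindComplete

section BandProjection

variable [ConditionallyCompleteLattice E] [AddCommGroup E] {p e b : E}

theorem inf_nsmul_le_bandProjApp (m : ℕ) : e ⊓ m • p ≤ bandProjApp p e :=
  le_ciSup (f := fun m : ℕ => e ⊓ m • p) ⟨e, forall_mem_range.2 fun _ => inf_le_left⟩ m

theorem inf_le_bandProjApp : e ⊓ p ≤ bandProjApp p e := by
  simpa using inf_nsmul_le_bandProjApp (e := e) (p := p) 1

theorem bandProjApp_le {c : E} (h : ∀ m : ℕ, e ⊓ m • p ≤ c) : bandProjApp p e ≤ c :=
  ciSup_le h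

theorem bandProjApp_nonneg (he : 0 ≤ e) : 0 ≤ bandProjApp p e := by
  simpa [inf_eq_right.2 he] using inf_nsmul_le_bandProjApp (e := e) (p := p) 0

variable [AddLeftMono E]

theorem bandProjApp_inf_eq_zero (hp : 0 ≤ p) (he : 0 ≤ e) (hb : 0 ≤ b) (hpb : p ⊓ b = 0) :
    bandProjApp p e ⊓ b = 0 := by
  set c := bandProjApp p e
  set d := c ⊓ b
  have hd : 0 ≤ d := le_inf (bandProjApp_nonneg he) hb
  have hcd : c ≤ c - d := bandProjApp_le fun m => by
    have hdisj : e ⊓ m • p ⊓ d = 0 := le_antisymm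
      ((inf_le_inf inf_le_right inf_le_right).trans_eq (nsmul_inf_eq_zero hp hb hpb m))
      (le_inf (le_inf he (nsmul_nonneg hp m)) hd)
    rw [le_sub_iff_add_le, ← inf_add_sup (e ⊓ m • p) d, hdisj, zero_add]
    exact sup_le (inf_nsmul_le_bandProjApp m) inf_le_left
  exact le_antisymm ((le_sub_self_iff c).1 hcd) hd

theorem sub_bandProjApp_inf_eq_zero (hp : 0 ≤ p) : (e - bandProjApp p e) ⊓ p = 0 := by
  set c := bandProjApp p e
  set r := (e - c) ⊓ p
  have hce : c ≤ e := bandProjApp_le fun _ => inf_le_left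
  have hcr : c ≤ c - r := bandProjApp_le fun m => by
    rw [le_sub_iff_add_le]
    refine le_trans ?_ (inf_nsmul_le_bandProjApp (m + 1))
    refine le_inf ?_ ?_
    · calc e ⊓ m • p + r ≤ c + (e - c) := add_le_add (inf_nsmul_le_bandProjApp m) inf_le_left
        _ = e := add_sub_cancel _ _
    · rw [succ_nsmul]
      exact add_le_add inf_le_right inf_le_right
  exact le_antisymm ((le_sub_self_iff c).1 hcr) (le_inf (sub_nonneg.2 hce) hp)

theorem isComponent_bandProjApp (hp : 0 ≤ p) (he : 0 ≤ e) :
    IsComponent e (bandProjApp p e) := by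
  have hce : bandProjApp p e ≤ e := bandProjApp_le fun _ => inf_le_left
  refine ⟨bandProjApp_nonneg he, hce, ?_⟩
  rw [inf_comm]
  exact bandProjApp_inf_eq_zero hp he (sub_nonneg.2 hce)
    (by rw [inf_comm]; exact sub_bandProjApp_inf_eq_zero hp)

theorem bandProjApp_posPart_le (he : 0 ≤ e) (a : E) :
    bandProjApp a⁺ e ≤ (a + e)⁺ ⊓ e := by
  have hdisj : a⁺ ⊓ (e - (a + e)⁺ ⊓ e) = 0 := le_antisymm
    ((inf_le_inf_left _ (sub_posPart_add_inf_le_negPart a)).trans_eq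
      (posPart_inf_negPart_eq_zero a))
    (le_inf (posPart_nonneg a) (sub_nonneg.2 inf_le_right))
  refine le_of_le_add_of_inf_eq_zero (bandProjApp_nonneg he) (le_inf (posPart_nonneg _) he)
    (sub_nonneg.2 inf_le_right) (bandProjApp_inf_eq_zero (posPart_nonneg a) he
      (sub_nonneg.2 inf_le_right) hdisj) ?_
  rw [add_sub_cancel]
  exact bandProjApp_le fun _ => inf_le_left

end BandProjection

namespace IsCEPS

variable [ConditionallyCompleteLattice E] [AddCommGroup E] [Module ℝ E]
  {T S : E →ₗ[ℝ] E} {e : E}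

theorem apply_of_mem_range (hC : IsCEPS T S e) {x : E} (hx : x ∈ range T) : T x = x := by
  obtain ⟨y, rfl⟩ := hx
  exact hC.T_proj y

theorem posPart_mem_range (hC : IsCEPS T S e) {x : E} (hx : x ∈ range T) : x⁺ ∈ range T :=
  hC.T_range_sublattice x hx 0 ⟨0, map_zero T⟩

theorem negPart_mem_range (hC : IsCEPS T S e) {x : E} (hx : x ∈ range T) : x⁻ ∈ range T :=
  hC.posPart_mem_range ((LinearMap.range T).neg_mem hx)

theorem S_nonneg (hC : IsCEPS T S e) {x : E} (hx : 0 ≤ x) : 0 ≤ S x := by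
  simpa [sup_eq_left.2 hx] using (le_sup_right : S 0 ≤ S x ⊔ S 0).trans_eq (hC.S_hom x 0).symm

variable [AddLeftMono E]

theorem inf_mem_range (hC : IsCEPS T S e) {x y : E} (hx : x ∈ range T) (hy : y ∈ range T) :
    x ⊓ y ∈ range T := by
  obtain ⟨z, hz⟩ := hC.T_range_sublattice (-x) ((LinearMap.range T).neg_mem hx)
    (-y) ((LinearMap.range T).neg_mem hy)
  exact ⟨-z, by rw [map_neg, hz, neg_sup, neg_neg, neg_neg]⟩

theorem T_mono (hC : IsCEPS T S e) {x y : E} (h : x ≤ y) : T x ≤ T y := by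
  simpa using hC.T_pos _ (sub_nonneg.2 h)

theorem S_mono (hC : IsCEPS T S e) {x y : E} (h : x ≤ y) : S x ≤ S y := by
  simpa using hC.S_nonneg (sub_nonneg.2 h)

theorem eq_of_le_of_T_eq (hC : IsCEPS T S e) {x y : E} (hxy : x ≤ y) (hT : T x = T y) :
    x = y :=
  (sub_eq_zero.1 (hC.T_strictPos _ (sub_nonneg.2 hxy) (by rw [map_sub, hT, sub_self]))).symm

theorem T_bandProjApp (hC : IsCEPS T S e) {p : E} (hp : p ∈ range T) :
    T (bandProjApp p e) = bandProjApp p e := by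
  have hle : bandProjApp p e ≤ T (bandProjApp p e) := bandProjApp_le fun m => by
    have hm : e ⊓ m • p ∈ range T :=
      hC.inf_mem_range ⟨e, hC.Te⟩ ((LinearMap.range T).nsmul_mem hp m)
    rw [← hC.apply_of_mem_range hm]
    exact hC.T_mono (inf_nsmul_le_bandProjApp m)
  exact (hC.eq_of_le_of_T_eq hle (hC.T_proj _).symm).symm

theorem le_S_of_isComponent (hC : IsCEPS T S e) {c : E} (hc : IsComponent e c) (hTc : T c = c) :
    c ≤ S c := by
  obtain ⟨hc0, hce, hdisj⟩ := hc
  have hSce : S c ≤ e := (hC.S_mono hce).trans_eq hC.Se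
  have hpos : 0 ≤ c ⊓ (e - S c) := le_inf hc0 (sub_nonneg.2 hSce)
  have hT : T (c ⊓ (e - S c)) ≤ 0 :=
    calc T (c ⊓ (e - S c)) ≤ T c ⊓ T (e - S c) :=
          le_inf (hC.T_mono inf_le_left) (hC.T_mono inf_le_right)
      _ = 0 := by rw [map_sub, hC.TS, hC.Te, hTc, inf_comm, hdisj]
  refine le_of_le_add_of_inf_eq_zero hc0 (hC.S_nonneg hc0) (sub_nonneg.2 hSce)
    (hC.T_strictPos _ hpos (le_antisymm hT (hC.T_pos _ hpos))) ?_
  rwa [add_sub_cancel]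

theorem inf_succ_nsmul_le_S_add (hC : IsCEPS T S e) {x : E} (hx : 0 ≤ x) (hxT : x ∈ range T)
    (n : ℕ) : x ⊓ (n + 1) • e ≤ S x + e := by
  have he : 0 ≤ e := hC.unit.1.le
  set p : ℕ → E := fun k => (x - k • e)⁺
  set c : ℕ → E := fun k => bandProjApp (p (k + 1)) e
  have hpT : ∀ k, p k ∈ range T := fun k => hC.posPart_mem_range <|
    (LinearMap.range T).sub_mem hxT ((LinearMap.range T).nsmul_mem ⟨e, hC.Te⟩ k)
  have hc_le : ∀ k, c k ≤ p k ⊓ e := fun k => by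
    simpa only [c, p, succ_nsmul, sub_add_eq_sub_sub, sub_add_cancel]
      using bandProjApp_posPart_le he (x - (k + 1) • e)
  have hcS : ∀ k, c k ≤ S (c k) := fun k =>
    hC.le_S_of_isComponent (isComponent_bandProjApp (posPart_nonneg _) he)
      (hC.T_bandProjApp (hpT (k + 1)))
  have hsum_le : ∑ k ∈ Finset.range n, c k ≤ x :=
    calc ∑ k ∈ Finset.range n, c k ≤ ∑ k ∈ Finset.range n, p k ⊓ e :=
          Finset.sum_le_sum fun k _ => hc_le k
      _ = x ⊓ n • e := sum_posPart_sub_nsmul_inf hx he n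
      _ ≤ x := inf_le_left
  calc x ⊓ (n + 1) • e = ∑ k ∈ Finset.range n, p (k + 1) ⊓ e + p 0 ⊓ e := by
        rw [← sum_posPart_sub_nsmul_inf hx he, Finset.sum_range_succ']
    _ ≤ ∑ k ∈ Finset.range n, c k + e :=
        add_le_add (Finset.sum_le_sum fun k _ => (inf_comm _ e).trans_le inf_le_bandProjApp)
          inf_le_right
    _ ≤ S (∑ k ∈ Finset.range n, c k) + e := by
        rw [map_sum]
        exact add_le_add_left (Finset.sum_le_sum fun k _ => hcS k) e
    _ ≤ S x + e := add_le_add_left (hC.S_mono hsum_le) e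

theorem le_S_add (hC : IsCEPS T S e) {x : E} (hx : 0 ≤ x) (hxT : x ∈ range T) : x ≤ S x + e :=
  hC.unit.le_of_forall_inf_nsmul_le hx fun n =>
    (inf_le_inf_left x (nsmul_le_nsmul_left hC.unit.1.le n.le_succ)).trans
      (hC.inf_succ_nsmul_le_S_add hx hxT n)

theorem S_eq_of_nonneg (hC : IsCEPS T S e) {g : E} (hg : 0 ≤ g) (hgT : g ∈ range T) :
    S g = g := by
  have hn : ∀ n : ℕ, n • (g - S g) ≤ e := fun n => by
    rw [nsmul_sub, sub_le_iff_le_add', ← map_nsmul]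
    exact hC.le_S_add (nsmul_nonneg hg n) ((LinearMap.range T).nsmul_mem hgT n)
  have hle : g ≤ S g := sub_nonpos.1 (nonpos_of_forall_nsmul_le hn)
  exact (hC.eq_of_le_of_T_eq hle (hC.TS g).symm).symm

end IsCEPS

theorem fixed_on_range_general {E : Type*} [ConditionallyCompleteLattice E] [AddCommGroup E]
    [Module ℝ E] [CovariantClass E E (· + ·) (· ≤ ·)]
    (T S : E →ₗ[ℝ] E) (e : E) (hCEPS : IsCEPS T S e) :
    ∀ g ∈ Set.range T, S g = g := by
  intro g hg
  rw [← posPart_sub_negPart g, map_sub,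
    hCEPS.S_eq_of_nonneg (posPart_nonneg g) (hCEPS.posPart_mem_range hg),
    hCEPS.S_eq_of_nonneg (negPart_nonneg g) (hCEPS.negPart_mem_range hg)]

/-- If `(E,T,S,e)` is a conditional expectation preserving system with `T` strictly
positive, then `Sg = g` for every `g` in the range of `T`. -/
theorem fixed_on_range {E : Type*} [ConditionallyCompleteLattice E] [AddCommGroup E]
    [Module ℝ E] [CovariantClass E E (· + ·) (· ≤ ·)] [PosSMulMono ℝ E]
    (T S : E →ₗ[ℝ] E) (e : E) (hCEPS : IsCEPS T S e) :
    ∀ g ∈ Set.range T, S g = g :=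
  fixed_on_range_general T S e hCEPS
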